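/- Let 𝒢 be an undirected, mutant-biased fitness graph with n nodes, and let S ⊆ V be any seed set. Then the expected absorption time of the Heterogeneous Moran process started at S satisfies T(𝒢,S) ≤ (n² · m_max / r_min)³, where m_max = max_{u∈V} m(u) and r_min = min_{u∈V} r(u). -/

import Mathlib

open Finset
open scoped Classical

/-- A fitness graph: a finite strongly connected weighted directed graph together with
mutant and resident fitness functions. `w u v > 0` encodes that `(u,v)` is an edge
of non-zero weight; `w u ·` is a probability distribution. -/
structure FitnessGraph (V : Type) [Fintype V] [DecidableEq V] where
  w : V → V → ℝ
  m : V → ℝ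
  r : V → ℝ
  w_nonneg : ∀ u v, 0 ≤ w u v
  w_rowsum : ∀ u, ∑ v, w u v = 1
  strongly_connected : ∀ u v : V, Relation.ReflTransGen (fun a b => 0 < w a b) u v
  m_pos : ∀ u, 0 < m u
  r_pos : ∀ u, 0 < r u

variable {V : Type} [Fintype V] [DecidableEq V]

/-- A fitness graph is mutant-biased if `m(u) ≥ r(u)` for every node `u`. -/
def FitnessGraph.MutantBiased (G : FitnessGraph V) : Prop :=
  ∀ u, G.r u ≤ G.m u

/-- The (out-)degree of a node: the number of neighbors along edges of non-zero weight. -/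
noncomputable def FitnessGraph.deg (G : FitnessGraph V) (u : V) : ℕ :=
  (Finset.univ.filter fun v => 0 < G.w u v).card

/-- A fitness graph is undirected if its edge relation is symmetric and the weights
are uniform: `w(u,v) = 1/d(u)` for every edge `(u,v)`. -/
def FitnessGraph.Undirected (G : FitnessGraph V) : Prop :=
  (∀ u v, 0 < G.w u v → 0 < G.w v u) ∧
  ∀ u v, 0 < G.w u v → G.w u v = 1 / (G.deg u : ℝ)

/-- The fitness of node `u` in configuration `X`: `m(u)` if `u` is a mutant, `r(u)` otherwise. -/
def FitnessGraph.fit (G : FitnessGraph V) (X : Finset V) (u : V) : ℝ :=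
  if u ∈ X then G.m u else G.r u

/-- Total population fitness in configuration `X`. -/
def FitnessGraph.totalFit (G : FitnessGraph V) (X : Finset V) : ℝ :=
  ∑ u, G.fit X u

/-- The configuration resulting from `X` when `u` reproduces and replaces `v`. -/
def moranNext (X : Finset V) (u v : V) : Finset V :=
  if u ∈ X then insert v X else X.erase v

/-- One-step transition probability of the Heterogeneous Moran process. -/
noncomputable def FitnessGraph.step (G : FitnessGraph V) (X Y : Finset V) : ℝ :=
  ∑ u, ∑ v, (G.fit X u / G.totalFit X) * G.w u v * (if moranNext X u v = Y then 1 else 0)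

/-- `t`-step transition probability of the Heterogeneous Moran process. -/
noncomputable def FitnessGraph.stepN (G : FitnessGraph V) : ℕ → Finset V → Finset V → ℝ
  | 0, X, Y => if X = Y then 1 else 0
  | t + 1, X, Y => ∑ Z, FitnessGraph.stepN G t X Z * G.step Z Y

/-- Fixation probability: the probability that, started from seed set `S`, the process
eventually reaches the all-mutant configuration `V`; since `V` is absorbing this equals
`⨆ t, P(X_t = V)`. -/
noncomputable def FitnessGraph.fp (G : FitnessGraph V) (S : Finset V) : ℝ :=
  ⨆ t : ℕ, G.stepN t S Finset.univ

/-- Maximum mutant fitness in the graph. -/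
noncomputable def FitnessGraph.mmax (G : FitnessGraph V) [Nonempty V] : ℝ :=
  Finset.univ.sup' Finset.univ_nonempty G.m

/-- Minimum resident fitness in the graph. -/
noncomputable def FitnessGraph.rmin (G : FitnessGraph V) [Nonempty V] : ℝ :=
  Finset.univ.inf' Finset.univ_nonempty G.r

/-- The expected absorption time `T(𝒢,S) = ∑_{t ≥ 0} P(X_t ∉ {∅, V})`. -/
noncomputable def FitnessGraph.absorbTime (G : FitnessGraph V) (S : Finset V) : ENNReal :=
  ∑' t : ℕ, ENNReal.ofReal
    (∑ X ∈ Finset.univ.filter (fun X : Finset V => X ≠ ∅ ∧ X ≠ Finset.univ), G.stepN t S X)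

/-!
The potential `φ(X) = ∑_{u ∈ X} r(u) / deg(u)` is a submartingale of the process on an undirected
mutant-biased graph: the expected changes of `φ` caused by a reproduction along an edge `(u, v)`
leaving `X` and by the reverse one add up to a multiple of `m(u) - r(u) ≥ 0`. While the process
is not absorbed some edge leaves `X`, so `φ²` grows in expectation by at least
`r_min³ / (n⁴ m_max)` per step. As `0 ≤ φ ≤ n m_max`, the expected number of unabsorbed steps
is at most `(n m_max)² · n⁴ m_max / r_min³ = (n² m_max / r_min)³`.
-/

lemma Relation.ReflTransGen.exists_rel_of_mem_of_notMem {α : Type*} {r : α → α → Prop} {a b : α}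
    {s : Set α} (h : Relation.ReflTransGen r a b) (ha : a ∈ s) (hb : b ∉ s) :
    ∃ x ∈ s, ∃ y ∉ s, r x y := by
  induction h with
  | refl => exact absurd ha hb
  | @tail c d _ hcd ih =>
    by_cases hc : c ∈ s
    · exact ⟨c, hc, d, hb, hcd⟩
    · exact ih hc

lemma Finset.sum_sum_eq_sum_sum_compl_add_swap {α β : Type*} [Fintype α] [DecidableEq α]
    [AddCommMonoid β] (s : Finset α) (f : α → α → β)
    (hin : ∀ x ∈ s, ∀ y ∈ s, f x y = 0) (hout : ∀ x ∉ s, ∀ y ∉ s, f x y = 0) :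
    ∑ x, ∑ y, f x y = ∑ x ∈ s, ∑ y ∈ sᶜ, (f x y + f y x) := by
  have hrow_in : ∀ x ∈ s, ∑ y, f x y = ∑ y ∈ sᶜ, f x y := fun x hx => by
    rw [← sum_add_sum_compl s, sum_eq_zero (hin x hx), zero_add]
  have hrow_out : ∀ x ∈ sᶜ, ∑ y, f x y = ∑ y ∈ s, f x y := fun x hx => by
    rw [← sum_add_sum_compl s, sum_eq_zero fun y hy => hout x (mem_compl.1 hx) y (mem_compl.1 hy),
      add_zero]
  rw [← sum_add_sum_compl s, sum_congr rfl hrow_in, sum_congr rfl hrow_out, sum_comm (s := sᶜ)]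
  simp only [sum_add_distrib]

lemma ENNReal.tsum_ofReal_le_of_sum_range_le {f : ℕ → ℝ} {c : ℝ} (hf : ∀ n, 0 ≤ f n)
    (h : ∀ n, ∑ i ∈ Finset.range n, f i ≤ c) : ∑' n, ENNReal.ofReal (f n) ≤ ENNReal.ofReal c :=
  ENNReal.tsum_le_of_sum_range_le fun n => by
    rw [← ENNReal.ofReal_sum_of_nonneg fun i _ => hf i]
    exact ENNReal.ofReal_le_ofReal (h n)

theorem sum_range_sum_le_of_drift {α : Type*} [Fintype α] (P : α → α → ℝ) (μ : ℕ → α → ℝ)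
    (hμ_succ : ∀ t Y, μ (t + 1) Y = ∑ Z, μ t Z * P Z Y) (hμ_nonneg : ∀ t Z, 0 ≤ μ t Z)
    (hμ_mass : ∀ t, ∑ Z, μ t Z = 1) {g : α → ℝ} {B c : ℝ} (hg_nonneg : ∀ X, 0 ≤ g X)
    (hg_le : ∀ X, g X ≤ B) (hc : 0 < c) (T : Finset α)
    (hsub : ∀ X, g X ≤ ∑ Y, P X Y * g Y) (hdrift : ∀ X ∈ T, g X + c ≤ ∑ Y, P X Y * g Y)
    (N : ℕ) : ∑ t ∈ Finset.range N, ∑ X ∈ T, μ t X ≤ B / c := by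
  set A : ℕ → ℝ := fun t => ∑ X, μ t X * g X
  have hA_succ : ∀ t, A t + c * ∑ X ∈ T, μ t X ≤ A (t + 1) := fun t => calc
    A t + c * ∑ X ∈ T, μ t X = ∑ Z, μ t Z * (g Z + if Z ∈ T then c else 0) := by
      simp only [A, mul_add, sum_add_distrib, mul_ite, mul_zero, sum_ite_mem, univ_inter,
        mul_comm c, sum_mul]
    _ ≤ ∑ Z, μ t Z * ∑ Y, P Z Y * g Y := by
      gcongr with Z
      · exact hμ_nonneg t Z
      · split_ifs with hZ
        exacts [hdrift Z hZ, (add_zero _).le.trans (hsub Z)]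
    _ = A (t + 1) := by
      simp only [A, hμ_succ, sum_mul, mul_sum, mul_assoc]
      exact sum_comm
  have hA_range : ∀ N, A 0 + c * ∑ t ∈ Finset.range N, ∑ X ∈ T, μ t X ≤ A N := by
    intro N
    induction N with
    | zero => simp
    | succ N ih => rw [sum_range_succ, mul_add]; linarith [hA_succ N]
  have hA_nonneg : 0 ≤ A 0 := sum_nonneg fun X _ => mul_nonneg (hμ_nonneg 0 X) (hg_nonneg X)
  have hA_le : A N ≤ B := calc
    A N ≤ ∑ X, μ N X * B :=
      sum_le_sum fun X _ => mul_le_mul_of_nonneg_left (hg_le X) (hμ_nonneg N X)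
    _ = B := by rw [← sum_mul, hμ_mass, one_mul]
  rw [le_div_iff₀ hc, mul_comm]
  linarith [hA_range N]

namespace FitnessGraph

variable (G : FitnessGraph V)

lemma deg_pos (u : V) : 0 < G.deg u := by
  obtain ⟨v, -, hv⟩ := exists_lt_of_sum_lt (by simp [G.w_rowsum] :
    ∑ _v : V, (0 : ℝ) < ∑ v, G.w u v)
  exact card_pos.2 ⟨v, mem_filter.2 ⟨mem_univ v, hv⟩⟩

lemma deg_le_card (u : V) : G.deg u ≤ Fintype.card V :=
  card_filter_le _ _

lemma Undirected.w_mul_deg_comm {G : FitnessGraph V} (hund : G.Undirected) (u v : V) :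
    G.w u v * G.deg u = G.w v u * G.deg v := by
  have hdeg : ∀ u, (G.deg u : ℝ) ≠ 0 := fun u => Nat.cast_ne_zero.2 (G.deg_pos u).ne'
  by_cases huv : 0 < G.w u v
  · rw [hund.2 u v huv, hund.2 v u (hund.1 u v huv), one_div_mul_cancel (hdeg u),
      one_div_mul_cancel (hdeg v)]
  · have hvu : ¬ 0 < G.w v u := fun hvu => huv (hund.1 v u hvu)
    rw [← (G.w_nonneg u v).antisymm (not_lt.1 huv), ← (G.w_nonneg v u).antisymm (not_lt.1 hvu),
      zero_mul, zero_mul]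

lemma fit_pos (X : Finset V) (u : V) : 0 < G.fit X u := by
  unfold fit; split_ifs
  exacts [G.m_pos u, G.r_pos u]

noncomputable def replaceProb (X : Finset V) (u v : V) : ℝ :=
  G.fit X u / G.totalFit X * G.w u v

lemma sum_step_mul (X : Finset V) (g : Finset V → ℝ) :
    ∑ Y, G.step X Y * g Y = ∑ u, ∑ v, G.replaceProb X u v * g (moranNext X u v) := by
  simp only [step, sum_mul, mul_ite, mul_one, mul_zero, ite_mul, zero_mul]
  rw [sum_comm]
  refine sum_congr rfl fun u _ => ?_
  rw [sum_comm]
  simp [replaceProb]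

noncomputable def potential (X : Finset V) : ℝ :=
  ∑ u ∈ X, G.r u / G.deg u

noncomputable def potentialChange (X : Finset V) (u v : V) : ℝ :=
  if u ∈ X then (if v ∈ X then 0 else G.r v / G.deg v)
  else (if v ∈ X then -(G.r v / G.deg v) else 0)

lemma potential_moranNext (X : Finset V) (u v : V) :
    G.potential (moranNext X u v) = G.potential X + G.potentialChange X u v := by
  unfold moranNext potentialChange potential
  split_ifs with hu hv hv
  · rw [insert_eq_self.2 hv, add_zero]
  · rw [sum_insert hv, add_comm]
  · rw [sum_erase_eq_sub hv, sub_eq_add_neg]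
  · rw [erase_eq_of_notMem hv, add_zero]

lemma potential_nonneg (X : Finset V) : 0 ≤ G.potential X :=
  sum_nonneg fun u _ => div_nonneg (G.r_pos u).le (Nat.cast_nonneg _)

variable [Nonempty V]

lemma totalFit_pos (X : Finset V) : 0 < G.totalFit X :=
  sum_pos (fun u _ => G.fit_pos X u) univ_nonempty

lemma replaceProb_nonneg (X : Finset V) (u v : V) : 0 ≤ G.replaceProb X u v :=
  mul_nonneg (div_nonneg (G.fit_pos X u).le (G.totalFit_pos X).le) (G.w_nonneg u v)

lemma sum_replaceProb (X : Finset V) : ∑ u, ∑ v, G.replaceProb X u v = 1 := by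
  simp only [replaceProb, ← mul_sum, w_rowsum, mul_one, ← sum_div]
  exact div_self (G.totalFit_pos X).ne'

lemma step_nonneg (X Y : Finset V) : 0 ≤ G.step X Y :=
  sum_nonneg fun u _ => sum_nonneg fun v _ =>
    mul_nonneg (G.replaceProb_nonneg X u v) (by split_ifs <;> norm_num)

lemma sum_step (X : Finset V) : ∑ Y, G.step X Y = 1 := by
  simpa [sum_replaceProb] using G.sum_step_mul X fun _ => 1

lemma stepN_nonneg (t : ℕ) (X Y : Finset V) : 0 ≤ G.stepN t X Y := by
  induction t generalizing Y with
  | zero => unfold stepN; positivity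
  | succ t ih => exact sum_nonneg fun Z _ => mul_nonneg (ih Z) (G.step_nonneg Z Y)

lemma sum_stepN (t : ℕ) (X : Finset V) : ∑ Y, G.stepN t X Y = 1 := by
  induction t with
  | zero => simp [stepN]
  | succ t ih => simp only [stepN]; rw [sum_comm]; simp [← mul_sum, sum_step, ih]

lemma rmin_pos : 0 < G.rmin :=
  (lt_inf'_iff _).2 fun u _ => G.r_pos u

lemma rmin_le_r (u : V) : G.rmin ≤ G.r u :=
  inf'_le _ (mem_univ u)

lemma m_le_mmax (u : V) : G.m u ≤ G.mmax :=
  le_sup' _ (mem_univ u)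

lemma mmax_pos : 0 < G.mmax :=
  (G.m_pos (Classical.arbitrary V)).trans_le (G.m_le_mmax _)

lemma MutantBiased.fit_le_mmax {G : FitnessGraph V} (hbias : G.MutantBiased) (X : Finset V)
    (u : V) : G.fit X u ≤ G.mmax := by
  unfold fit; split_ifs
  exacts [G.m_le_mmax u, (hbias u).trans (G.m_le_mmax u)]

lemma MutantBiased.totalFit_le {G : FitnessGraph V} (hbias : G.MutantBiased) (X : Finset V) :
    G.totalFit X ≤ Fintype.card V * G.mmax := by
  simpa [totalFit] using sum_le_sum fun u (_ : u ∈ univ) => hbias.fit_le_mmax X u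

variable {G}

lemma MutantBiased.potential_le (hbias : G.MutantBiased) (X : Finset V) :
    G.potential X ≤ Fintype.card V * G.mmax := calc
  G.potential X ≤ ∑ _u : V, G.mmax := by
    refine sum_le_sum_of_subset_of_nonneg (subset_univ X) (fun u _ _ => ?_) |>.trans
      (sum_le_sum fun u _ => ?_)
    · exact div_nonneg (G.r_pos u).le (Nat.cast_nonneg _)
    · calc G.r u / G.deg u ≤ G.r u := div_le_self (G.r_pos u).le (by exact_mod_cast G.deg_pos u)
        _ ≤ G.mmax := (hbias u).trans (G.m_le_mmax u)
  _ = Fintype.card V * G.mmax := by simp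

lemma replaceProb_mul_potentialChange_add_swap_nonneg (hund : G.Undirected)
    (hbias : G.MutantBiased) {X : Finset V} {u v : V} (hu : u ∈ X) (hv : v ∉ X) :
    0 ≤ G.replaceProb X u v * G.potentialChange X u v
      + G.replaceProb X v u * G.potentialChange X v u := by
  have hF := G.totalFit_pos X
  have hdu : (0 : ℝ) < G.deg u := by exact_mod_cast G.deg_pos u
  have hdv : (0 : ℝ) < G.deg v := by exact_mod_cast G.deg_pos v
  have hsum : G.replaceProb X u v * G.potentialChange X u v
      + G.replaceProb X v u * G.potentialChange X v u
      = G.w u v * G.r v * (G.m u - G.r u) / (G.totalFit X * G.deg v) := by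
    simp only [replaceProb, potentialChange, fit, hu, hv, if_true, if_false]
    field_simp
    linear_combination G.r u * G.r v * hund.w_mul_deg_comm u v
  rw [hsum]
  have := G.w_nonneg u v
  have := G.r_pos v
  have := sub_nonneg.2 (hbias u)
  positivity

lemma sum_replaceProb_mul_potentialChange_nonneg (hund : G.Undirected)
    (hbias : G.MutantBiased) (X : Finset V) :
    0 ≤ ∑ u, ∑ v, G.replaceProb X u v * G.potentialChange X u v := by
  rw [sum_sum_eq_sum_sum_compl_add_swap X]
  · exact sum_nonneg fun u hu => sum_nonneg fun v hv =>
      replaceProb_mul_potentialChange_add_swap_nonneg hund hbias hu (mem_compl.1 hv)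
  · intro u hu v hv
    simp [potentialChange, hu, hv]
  · intro u hu v hv
    simp [potentialChange, hu, hv]

lemma le_sum_replaceProb_mul_potentialChange_sq (hund : G.Undirected) (hbias : G.MutantBiased)
    {X : Finset V} (hX : X ≠ ∅) (hX' : X ≠ univ) :
    G.rmin ^ 3 / ((Fintype.card V : ℝ) ^ 4 * G.mmax)
      ≤ ∑ u, ∑ v, G.replaceProb X u v * G.potentialChange X u v ^ 2 := by
  obtain ⟨a₀, ha₀⟩ := nonempty_iff_ne_empty.2 hX
  obtain ⟨b₀, hb₀⟩ : ∃ b, b ∉ X := by simpa [eq_univ_iff_forall] using hX'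
  obtain ⟨a, ha : a ∈ X, b, hb : b ∉ X, hab⟩ :=
    (G.strongly_connected a₀ b₀).exists_rel_of_mem_of_notMem (s := X) ha₀ hb₀
  have hterm_nonneg : ∀ u v, 0 ≤ G.replaceProb X u v * G.potentialChange X u v ^ 2 :=
    fun u v => mul_nonneg (G.replaceProb_nonneg X u v) (sq_nonneg _)
  have hda : (0 : ℝ) < G.deg a := by exact_mod_cast G.deg_pos a
  have hdb : (0 : ℝ) < G.deg b := by exact_mod_cast G.deg_pos b
  have hdan : (G.deg a : ℝ) ≤ Fintype.card V := by exact_mod_cast G.deg_le_card a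
  have hdbn : (G.deg b : ℝ) ≤ Fintype.card V := by exact_mod_cast G.deg_le_card b
  have hma : G.rmin ≤ G.m a := (G.rmin_le_r a).trans (hbias a)
  have hrb := G.rmin_le_r b
  have := G.r_pos b
  have hFle := hbias.totalFit_le X
  have hF := G.totalFit_pos X
  have := G.m_pos a
  have := G.rmin_pos
  have := G.mmax_pos
  set n : ℝ := (Fintype.card V : ℝ)
  have hn : 0 < n := Nat.cast_pos.2 Fintype.card_pos
  calc G.rmin ^ 3 / (n ^ 4 * G.mmax) = G.rmin / (n * G.mmax) * (1 / n) * (G.rmin / n) ^ 2 := by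
        field_simp
    _ ≤ G.m a / G.totalFit X * (1 / G.deg a) * (G.r b / G.deg b) ^ 2 := by
        gcongr
    _ = G.replaceProb X a b * G.potentialChange X a b ^ 2 := by
        simp [replaceProb, potentialChange, fit, ha, hb, hund.2 a b hab]
    _ ≤ ∑ v, G.replaceProb X a v * G.potentialChange X a v ^ 2 :=
        single_le_sum (fun v _ => hterm_nonneg a v) (mem_univ b)
    _ ≤ ∑ u, ∑ v, G.replaceProb X u v * G.potentialChange X u v ^ 2 :=
        single_le_sum (f := fun u => ∑ v, G.replaceProb X u v * G.potentialChange X u v ^ 2)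
          (fun u _ => sum_nonneg fun v _ => hterm_nonneg u v) (mem_univ a)

lemma sum_step_mul_potential_sq (X : Finset V) :
    ∑ Y, G.step X Y * G.potential Y ^ 2 = G.potential X ^ 2
      + 2 * G.potential X * ∑ u, ∑ v, G.replaceProb X u v * G.potentialChange X u v
      + ∑ u, ∑ v, G.replaceProb X u v * G.potentialChange X u v ^ 2 := by
  simp only [sum_step_mul, potential_moranNext, add_sq, mul_add, sum_add_distrib, ← sum_mul,
    sum_replaceProb, mul_sum]
  ring_nf

lemma potential_sq_le_sum_step_mul (hund : G.Undirected) (hbias : G.MutantBiased)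
    (X : Finset V) : G.potential X ^ 2 ≤ ∑ Y, G.step X Y * G.potential Y ^ 2 := by
  have := G.potential_nonneg X
  have := sum_replaceProb_mul_potentialChange_nonneg hund hbias X
  have : 0 ≤ ∑ u, ∑ v, G.replaceProb X u v * G.potentialChange X u v ^ 2 :=
    sum_nonneg fun u _ => sum_nonneg fun v _ =>
      mul_nonneg (G.replaceProb_nonneg X u v) (sq_nonneg _)
  rw [sum_step_mul_potential_sq]
  nlinarith

lemma potential_sq_add_le_sum_step_mul (hund : G.Undirected) (hbias : G.MutantBiased)
    {X : Finset V} (hX : X ≠ ∅) (hX' : X ≠ univ) :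
    G.potential X ^ 2 + G.rmin ^ 3 / ((Fintype.card V : ℝ) ^ 4 * G.mmax)
      ≤ ∑ Y, G.step X Y * G.potential Y ^ 2 := by
  have := G.potential_nonneg X
  have := sum_replaceProb_mul_potentialChange_nonneg hund hbias X
  have := le_sum_replaceProb_mul_potentialChange_sq hund hbias hX hX'
  rw [sum_step_mul_potential_sq]
  nlinarith

end FitnessGraph

/-- On an undirected mutant-biased fitness graph with `n` nodes, the expected absorption
time of the Heterogeneous Moran process started at any seed set `S` is at most
`(n² · m_max / r_min)³`. -/
theorem expected_absorption_time_bound [Nonempty V] (G : FitnessGraph V)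
    (hund : G.Undirected) (hbias : G.MutantBiased) (S : Finset V) :
    G.absorbTime S ≤ ENNReal.ofReal (((Fintype.card V : ℝ) ^ 2 * G.mmax / G.rmin) ^ 3) := by
  set n : ℝ := (Fintype.card V : ℝ)
  have hn : 0 < n := Nat.cast_pos.2 Fintype.card_pos
  have := G.rmin_pos
  have := G.mmax_pos
  have htime := sum_range_sum_le_of_drift G.step (fun t => G.stepN t S) (fun _ _ => rfl)
    (fun t => G.stepN_nonneg t S) (fun t => G.sum_stepN t S) (B := (n * G.mmax) ^ 2)
    (fun X => sq_nonneg (G.potential X))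
    (fun X => pow_le_pow_left₀ (G.potential_nonneg X) (hbias.potential_le X) 2)
    (by positivity : 0 < G.rmin ^ 3 / (n ^ 4 * G.mmax))
    (univ.filter fun X : Finset V => X ≠ ∅ ∧ X ≠ univ)
    (G.potential_sq_le_sum_step_mul hund hbias)
    (fun X hX => G.potential_sq_add_le_sum_step_mul hund hbias (mem_filter.1 hX).2.1
      (mem_filter.1 hX).2.2)
  have hbound : (n * G.mmax) ^ 2 / (G.rmin ^ 3 / (n ^ 4 * G.mmax))
      = (n ^ 2 * G.mmax / G.rmin) ^ 3 := by
    field_simp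
  exact ENNReal.tsum_ofReal_le_of_sum_range_le
    (fun t => sum_nonneg fun X _ => G.stepN_nonneg t S X) (hbound ▸ htime)
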